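/- For a weight λ in P_{++}^{(h)}, setting λ'_i = λ_i/h, we have g^{(σ^j(λ))} = (-1)^j ∏_{l=1}^{N} 2cos(π(p_l(λ') - j/N)), where g^{(μ)} = ∏_{i=1}^N (1 + exp(-2πi (e_i, μ)/h)) and σ is the ℤ_N rotation on integrable weights. -/

import Mathlib

/-- The pairing `(e_i, μ)` for a weight `μ = ∑ μ_j Λ_j` of `SL(N)`:
`(e_i, μ) = ∑_{j=i}^{N-1} μ_j - (1/N) ∑_{j=1}^{N-1} j μ_j` (empty first sum for `i = N`). -/
noncomputable def epair (N : ℕ) (μ : ℕ → ℤ) (i : ℕ) : ℝ :=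
  (∑ j ∈ Finset.Icc i (N - 1), (μ j : ℝ))
    - (1 / (N : ℝ)) * ∑ j ∈ Finset.Icc 1 (N - 1), (j : ℝ) * (μ j : ℝ)

/-- `p_i(λ')` for `λ'` a tuple of reals, as in the paper. -/
noncomputable def pp (N : ℕ) (l : ℕ → ℝ) (i : ℕ) : ℝ :=
  (∑ j ∈ Finset.Icc i (N - 1), l j)
    - (1 / (N : ℝ)) * ∑ j ∈ Finset.Icc 1 (N - 1), (j : ℝ) * l j

/-- The `ℤ_N` rotation `σ` on integrable weights at level `h - N`:
`σ(λ) = (h - ∑ λ_j, λ_1, ..., λ_{N-2})` (coordinates outside `1..N-1` set to `0`). -/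
def sigmaRot (N h : ℕ) (μ : ℕ → ℤ) : ℕ → ℤ := fun i =>
  if i = 1 then (h : ℤ) - ∑ j ∈ Finset.Icc 1 (N - 1), μ j
  else if i ≤ N - 1 then μ (i - 1) else 0

/-- `g^{(μ)} = ∏_{i=1}^N (1 + exp(-2πi (e_i, μ)/h))`. -/
noncomputable def gEig (N h : ℕ) (μ : ℕ → ℤ) : ℂ :=
  ∏ i ∈ Finset.Icc 1 N,
    (1 + Complex.exp (-(2 * Real.pi * Complex.I) * (epair N μ i) / (h : ℂ)))

/-!
Since `1 + e^{-2πix} = e^{-πix} · 2cos(πx)` and the `(e_i, μ)` sum to zero, the phases cancel and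
`g^{(μ)} = ∏_l 2cos(π (e_l, μ) / h)`. The rotation gives `(e_l, σμ) = (e_{l-1}, μ) - h/N` for
`l ≥ 2` and `(e_1, σμ) = (e_N, μ) + h - h/N`: applying `σ` permutes the cosine arguments
cyclically and lowers them by `π/N`, while the extra `π` in the first one contributes a factor
`-1`. Induction on `j` finishes the proof.
-/

open Finset Real

lemma sum_epair_eq_zero (N : ℕ) (μ : ℕ → ℤ) : ∑ i ∈ Icc 1 N, epair N μ i = 0 := by
  rcases eq_or_ne N 0 with rfl | hN
  · simp
  have hswap : ∑ i ∈ Icc 1 N, ∑ j ∈ Icc i (N - 1), (μ j : ℝ)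
      = ∑ j ∈ Icc 1 (N - 1), (j : ℝ) * μ j := by
    rw [sum_comm' (s' := fun j => Icc 1 j) (t' := Icc 1 (N - 1))
      (by intro x y; simp only [mem_Icc]; omega)]
    simp
  simp only [epair, sum_sub_distrib, hswap, sum_const, Nat.card_Icc, nsmul_eq_mul,
    Nat.add_sub_cancel]
  field_simp
  ring

lemma one_add_exp_neg_two_pi_I_mul (x : ℝ) :
    1 + Complex.exp (-(2 * π * Complex.I) * x)
      = Complex.exp (-(π * Complex.I) * x) * (2 * Real.cos (π * x)) := by
  rw [Complex.ofReal_cos, Complex.two_cos, mul_add, ← Complex.exp_add, ← Complex.exp_add]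
  push_cast
  ring_nf
  rw [Complex.exp_zero, add_comm]

lemma gEig_eq_prod_cos (N h : ℕ) (μ : ℕ → ℤ) :
    gEig N h μ = ((∏ i ∈ Icc 1 N, 2 * Real.cos (π * (epair N μ i / h)) : ℝ) : ℂ) := by
  have hfactor (i : ℕ) :
      1 + Complex.exp (-(2 * π * Complex.I) * epair N μ i / h)
        = Complex.exp (-(π * Complex.I) * (epair N μ i / h : ℝ))
          * (2 * Real.cos (π * (epair N μ i / h))) := by
    rw [← one_add_exp_neg_two_pi_I_mul, mul_div_assoc]
    push_cast
    rfl
  have hphase : ∑ i ∈ Icc 1 N, -(π * Complex.I) * (epair N μ i / h : ℝ) = 0 := by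
    rw [← mul_sum, ← Complex.ofReal_sum, ← sum_div, sum_epair_eq_zero]
    simp
  simp only [gEig, hfactor, prod_mul_distrib, ← Complex.exp_sum, hphase, Complex.exp_zero,
    one_mul]
  push_cast
  rfl

section Rotation

variable {N : ℕ} (h : ℕ) (μ : ℕ → ℤ)

lemma sigmaRot_one : (sigmaRot N h μ 1 : ℝ) = h - ∑ j ∈ Icc 1 (N - 1), (μ j : ℝ) := by
  simp [sigmaRot]

lemma sum_Icc_add_one_sigmaRot (hN : 2 ≤ N) {a : ℕ} (ha : 1 ≤ a) (f : ℕ → ℤ → ℝ) :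
    ∑ j ∈ Icc (a + 1) (N - 1), f j (sigmaRot N h μ j) = ∑ k ∈ Icc a (N - 2), f (k + 1) (μ k) := by
  obtain ⟨n, rfl⟩ : ∃ n, N = n + 2 := ⟨N - 2, by omega⟩
  rw [show n + 2 - 1 = n + 1 by omega, Nat.add_sub_cancel, ← map_add_right_Icc, sum_map]
  refine sum_congr rfl fun k hk => ?_
  have hk := mem_Icc.mp hk
  simp [sigmaRot, show k ≠ 0 by omega, show k + 1 ≤ n + 1 by omega]

lemma sum_Icc_sigmaRot (hN : 2 ≤ N) {i : ℕ} (hi : 2 ≤ i) (hiN : i ≤ N) :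
    ∑ j ∈ Icc i (N - 1), (sigmaRot N h μ j : ℝ)
      = ∑ j ∈ Icc (i - 1) (N - 1), (μ j : ℝ) - μ (N - 1) := by
  obtain ⟨a, rfl⟩ : ∃ a, i = a + 1 := ⟨i - 1, by omega⟩
  obtain ⟨n, rfl⟩ : ∃ n, N = n + 2 := ⟨N - 2, by omega⟩
  rw [sum_Icc_add_one_sigmaRot h μ (by omega) (by omega) fun _ x => (x : ℝ)]
  simp only [show n + 2 - 1 = n + 1 by omega, Nat.add_sub_cancel,
    sum_Icc_succ_top (show a ≤ n + 1 by omega)]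
  ring

lemma sum_Icc_mul_sigmaRot (hN : 2 ≤ N) :
    ∑ j ∈ Icc 1 (N - 1), (j : ℝ) * sigmaRot N h μ j
      = h + ∑ j ∈ Icc 1 (N - 1), (j : ℝ) * μ j - N * μ (N - 1) := by
  rw [← add_sum_Ioc_eq_sum_Icc (f := fun j : ℕ => (j : ℝ) * sigmaRot N h μ j) (by omega),
    ← Icc_add_one_left_eq_Ioc, sum_Icc_add_one_sigmaRot h μ hN le_rfl fun j x => (j : ℝ) * x,
    sigmaRot_one]
  obtain ⟨n, rfl⟩ : ∃ n, N = n + 2 := ⟨N - 2, by omega⟩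
  simp only [show n + 2 - 1 = n + 1 by omega, Nat.add_sub_cancel,
    sum_Icc_succ_top (show 1 ≤ n + 1 by omega), Nat.cast_add, Nat.cast_one, add_mul, one_mul,
    sum_add_distrib]
  push_cast
  ring

lemma epair_sigmaRot_of_two_le (hN : 2 ≤ N) {i : ℕ} (hi : 2 ≤ i) (hiN : i ≤ N) :
    epair N (sigmaRot N h μ) i = epair N μ (i - 1) - h / N := by
  have hN0 : (N : ℝ) ≠ 0 := by positivity
  rw [epair, epair, sum_Icc_sigmaRot h μ hN hi hiN, sum_Icc_mul_sigmaRot h μ hN]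
  field_simp
  ring

lemma epair_sigmaRot_one (hN : 2 ≤ N) :
    epair N (sigmaRot N h μ) 1 = epair N μ N + h - h / N := by
  have hN0 : (N : ℝ) ≠ 0 := by positivity
  rw [epair, epair, Icc_eq_empty (by omega : ¬N ≤ N - 1), sum_empty,
    ← add_sum_Ioc_eq_sum_Icc (f := fun j : ℕ => (sigmaRot N h μ j : ℝ)) (by omega),
    ← Icc_add_one_left_eq_Ioc, one_add_one_eq_two, sigmaRot_one,
    sum_Icc_sigmaRot h μ hN le_rfl hN, sum_Icc_mul_sigmaRot h μ hN]
  field_simp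
  ring

end Rotation

lemma prod_cos_epair_sigmaRot {N h : ℕ} (hN : 2 ≤ N) (hh : h ≠ 0) (μ : ℕ → ℤ) (t : ℝ) :
    ∏ l ∈ Icc 1 N, 2 * Real.cos (π * (epair N (sigmaRot N h μ) l / h - t))
      = -∏ l ∈ Icc 1 N, 2 * Real.cos (π * (epair N μ l / h - (t + 1 / N))) := by
  have hN0 : (N : ℝ) ≠ 0 := by positivity
  have hh0 : (h : ℝ) ≠ 0 := by positivity
  set G : ℕ → ℝ := fun l => 2 * Real.cos (π * (epair N μ l / h - (t + 1 / N))) with hG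
  have hfirst : 2 * Real.cos (π * (epair N (sigmaRot N h μ) 1 / h - t)) = -G N := by
    have harg : π * (epair N (sigmaRot N h μ) 1 / h - t)
        = π * (epair N μ N / h - (t + 1 / N)) + π := by
      rw [epair_sigmaRot_one h μ hN]
      field_simp
      ring
    rw [harg, Real.cos_add_pi, hG]
    ring
  have hshift : ∀ l ∈ Icc (1 + 1) N,
      2 * Real.cos (π * (epair N (sigmaRot N h μ) l / h - t)) = G (l - 1) := by
    intro l hl
    have hl := mem_Icc.mp hl
    rw [epair_sigmaRot_of_two_le h μ hN (by omega) hl.2, hG]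
    congr 3
    field_simp
    ring
  obtain ⟨n, rfl⟩ : ∃ n, N = n + 1 := ⟨N - 1, by omega⟩
  rw [← mul_prod_Ioc_eq_prod_Icc (by omega), ← Icc_add_one_left_eq_Ioc, hfirst,
    prod_congr rfl hshift, ← map_add_right_Icc, prod_map, prod_Icc_succ_top (by omega)]
  simp only [addRightEmbedding_apply, Nat.add_sub_cancel]
  ring

lemma gEig_iterate_sigmaRot {N h : ℕ} (hN : 2 ≤ N) (hh : h ≠ 0) (j : ℕ) (μ : ℕ → ℤ) :
    gEig N h ((sigmaRot N h)^[j] μ)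
      = (-1 : ℂ) ^ j *
          ((∏ l ∈ Icc 1 N, 2 * Real.cos (π * (epair N μ l / h - j / N)) : ℝ) : ℂ) := by
  induction j generalizing μ with
  | zero => simp [gEig_eq_prod_cos]
  | succ j ih =>
    rw [Function.iterate_succ_apply, ih, prod_cos_epair_sigmaRot hN hh, Nat.cast_succ,
      add_div]
    push_cast
    ring

lemma pp_div_eq_epair_div (N h : ℕ) (μ : ℕ → ℤ) (l : ℕ) :
    pp N (fun i => (μ i : ℝ) / h) l = epair N μ l / h := by
  simp only [pp, epair, sub_div, sum_div, mul_div_assoc]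

theorem stmt_15_general (N h : ℕ) (hN : 2 ≤ N) (hh : N < h) (lam : ℕ → ℤ) :
    ∀ j : ℕ,
      gEig N h ((sigmaRot N h)^[j] lam) =
        (-1 : ℂ) ^ j *
          ((∏ l ∈ Finset.Icc 1 N,
            2 * Real.cos (Real.pi *
              (pp N (fun i => (lam i : ℝ) / h) l - (j : ℝ) / N)) : ℝ) : ℂ) := by
  intro j
  simp only [pp_div_eq_epair_div]
  exact gEig_iterate_sigmaRot hN (by omega) j lam

theorem stmt_15 (N h : ℕ) (hN : 2 ≤ N) (hh : N < h) (lam : ℕ → ℤ)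
    (hpos : ∀ i ∈ Finset.Icc 1 (N - 1), 1 ≤ lam i)
    (hzero : ∀ i, i ∉ Finset.Icc 1 (N - 1) → lam i = 0)
    (hsum : ∑ i ∈ Finset.Icc 1 (N - 1), lam i < (h : ℤ)) :
    ∀ j : ℕ,
      gEig N h ((sigmaRot N h)^[j] lam) =
        (-1 : ℂ) ^ j *
          ((∏ l ∈ Finset.Icc 1 N,
            2 * Real.cos (Real.pi *
              (pp N (fun i => (lam i : ℝ) / h) l - (j : ℝ) / N)) : ℝ) : ℂ) :=
  stmt_15_general N h hN hh lam
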